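/- arXiv:2309.13892 — 2 statements merged into one kernel-verified Lean document; each statement's English description precedes it below -/
import Mathlib

section
/- Let T be the graph on vertex set {1,2,...,n} \ {3} (n ≥ 6) with edges {2,4}, {2,6}, and {1, i+4} for 1 ≤ i ≤ n-4. Then T is a tree, and {1,2} is a maximal independent set of T of minimum cardinality among all maximal independent sets of T. -/
/-- `A` is an independent set of vertices of `G`. -/
def IsIndepSet {V : Type} (G : SimpleGraph V) (A : Set V) : Prop :=
  ∀ a ∈ A, ∀ b ∈ A, ¬ G.Adj a b

/-- `A` is a maximal independent set of vertices of `G`. -/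
def IsMaxIndepSet {V : Type} (G : SimpleGraph V) (A : Set V) : Prop :=
  IsIndepSet G A ∧ ∀ B : Set V, IsIndepSet G B → A ⊆ B → B = A

/-- `C` is a vertex cover of `G`. -/
def IsVertexCover {V : Type} (G : SimpleGraph V) (C : Set V) : Prop :=
  ∀ a b : V, G.Adj a b → a ∈ C ∨ b ∈ C

/-- `C` is a minimal vertex cover of `G`. -/
def IsMinVertexCover {V : Type} (G : SimpleGraph V) (C : Set V) : Prop :=
  IsVertexCover G C ∧ ∀ D : Set V, D ⊆ C → IsVertexCover G D → D = C

/-- The graph `T` on vertex set `{1,…,n} \ {3}` with edges `{2,4}`, `{2,6}`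
and `{1, i+4}` for `1 ≤ i ≤ n-4`. -/
def Tgraph (n : ℕ) : SimpleGraph {i : ℕ // (1 ≤ i ∧ i ≤ n) ∧ i ≠ 3} :=
  SimpleGraph.fromRel (fun a b =>
    (a.val = 2 ∧ b.val = 4) ∨ (a.val = 2 ∧ b.val = 6) ∨
    (a.val = 1 ∧ ∃ i : ℕ, 1 ≤ i ∧ i ≤ n - 4 ∧ b.val = i + 4))

/-!
Removing the leaves `4` and `5, 7, 8, …, n` leaves the path `1 - 6 - 2`, so `T` is a tree.
The set `{1, 2}` is independent and dominating, hence maximal; no maximal independent set is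
smaller, because every vertex has a non-neighbour other than itself, so no singleton is
maximal.
-/

section IndependentSets

variable {V : Type} {G : SimpleGraph V}

theorem isIndepSet_singleton (G : SimpleGraph V) (v : V) : IsIndepSet G {v} := by
  rintro a rfl b rfl
  exact G.irrefl

theorem isIndepSet_pair {v w : V} (h : ¬G.Adj v w) : IsIndepSet G {v, w} := by
  rintro a (rfl | rfl) b (rfl | rfl)
  exacts [G.irrefl, h, fun h' => h h'.symm, G.irrefl]

theorem IsIndepSet.isMaxIndepSet {A : Set V} (hA : IsIndepSet G A)
    (hdom : ∀ v ∉ A, ∃ a ∈ A, G.Adj a v) : IsMaxIndepSet G A := by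
  refine ⟨hA, fun B hB hAB => Set.Subset.antisymm (fun v hv => ?_) hAB⟩
  by_contra hvA
  obtain ⟨a, ha, hav⟩ := hdom v hvA
  exact hB a (hAB ha) v hv hav

theorem IsMaxIndepSet.two_le_ncard [Finite V] [Nonempty V]
    (hnonadj : ∀ v, ∃ w, w ≠ v ∧ ¬G.Adj v w) {B : Set V} (hB : IsMaxIndepSet G B) :
    2 ≤ B.ncard := by
  by_contra! hlt
  obtain rfl | ⟨v, rfl⟩ := (Set.ncard_le_one_iff_eq B.toFinite).mp (by omega)
  · obtain ⟨v⟩ := ‹Nonempty V›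
    exact Set.singleton_ne_empty v (hB.2 _ (isIndepSet_singleton G v) (Set.empty_subset _))
  · obtain ⟨w, hwv, hvw⟩ := hnonadj v
    have hpair := hB.2 _ (isIndepSet_pair hvw) (Set.singleton_subset_iff.mpr (Set.mem_insert v {w}))
    exact hwv (hpair ▸ Set.mem_insert_of_mem v rfl : w ∈ ({v} : Set V))

end IndependentSets

namespace SimpleGraph

variable {V : Type} {G : SimpleGraph V}

theorem Walk.IsCycle.not_subsingleton_neighborSet_inter_support {u v : V} {c : G.Walk u u}
    (hc : c.IsCycle) (hv : v ∈ c.support) :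
    ¬(G.neighborSet v ∩ {w | w ∈ c.support}).Subsingleton := by
  intro hsub
  have hsub' : (c.toSubgraph.neighborSet v).Subsingleton :=
    hsub.anti fun w hw => ⟨c.toSubgraph.neighborSet_subset v hw,
      c.verts_toSubgraph ▸ Subgraph.Adj.snd_mem hw⟩
  have h2 := hc.ncard_neighborSet_toSubgraph_eq_two hv
  have h1 := (Set.ncard_le_one hsub'.finite).mpr hsub'
  omega

/-- A graph of degeneracy at most one is acyclic. -/
theorem isAcyclic_of_forall_exists_subsingleton_neighborSet_inter
    (h : ∀ S : Set V, S.Finite → S.Nontrivial → ∃ v ∈ S, (G.neighborSet v ∩ S).Subsingleton) :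
    G.IsAcyclic := by
  intro u c hc
  have hnontriv : {w | w ∈ c.support}.Nontrivial :=
    ⟨u, c.start_mem_support, c.snd, c.getVert_mem_support 1,
      (c.adj_snd hc.not_nil).ne⟩
  obtain ⟨v, hv, hsub⟩ := h _ c.support.finite_toSet hnontriv
  exact hc.not_subsingleton_neighborSet_inter_support hv hsub

end SimpleGraph

namespace Tgraph

variable {n : ℕ}

instance : Finite {i : ℕ // (1 ≤ i ∧ i ≤ n) ∧ i ≠ 3} :=
  ((Set.finite_Icc 1 n).subset fun _ hi => hi.1).to_subtype

theorem adj_iff (a b : {i : ℕ // (1 ≤ i ∧ i ≤ n) ∧ i ≠ 3}) :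
    (Tgraph n).Adj a b ↔
      ((a.val = 2 ∧ b.val = 4) ∨ (a.val = 2 ∧ b.val = 6) ∨ (a.val = 1 ∧ 5 ≤ b.val)) ∨
      ((b.val = 2 ∧ a.val = 4) ∨ (b.val = 2 ∧ a.val = 6) ∨ (b.val = 1 ∧ 5 ≤ a.val)) := by
  obtain ⟨a, ⟨ha1, han⟩, ha3⟩ := a
  obtain ⟨b, ⟨hb1, hbn⟩, hb3⟩ := b
  simp only [Tgraph, SimpleGraph.fromRel_adj, ne_eq, Subtype.mk.injEq]
  constructor
  · rintro ⟨-, (h | h | ⟨h1, i, hi⟩) | (h | h | ⟨h1, i, hi⟩)⟩ <;> omega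
  · rintro ((h | h | ⟨h1, h5⟩) | (h | h | ⟨h1, h5⟩))
    · exact ⟨by omega, .inl (.inl h)⟩
    · exact ⟨by omega, .inl (.inr (.inl h))⟩
    · exact ⟨by omega, .inl (.inr (.inr ⟨h1, b - 4, by omega⟩))⟩
    · exact ⟨by omega, .inr (.inl h)⟩
    · exact ⟨by omega, .inr (.inr (.inl h))⟩
    · exact ⟨by omega, .inr (.inr (.inr ⟨h1, a - 4, by omega⟩))⟩

theorem connected (hn : 6 ≤ n) : (Tgraph n).Connected := by
  let x1 : {i : ℕ // (1 ≤ i ∧ i ≤ n) ∧ i ≠ 3} := ⟨1, by omega⟩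
  let x2 : {i : ℕ // (1 ≤ i ∧ i ≤ n) ∧ i ≠ 3} := ⟨2, by omega⟩
  let x6 : {i : ℕ // (1 ≤ i ∧ i ≤ n) ∧ i ≠ 3} := ⟨6, by omega⟩
  have h16 : (Tgraph n).Adj x1 x6 := (adj_iff _ _).mpr (by simp [x1, x6])
  have h62 : (Tgraph n).Adj x6 x2 := (adj_iff _ _).mpr (by simp [x2, x6])
  refine ((Tgraph n).connected_iff_exists_forall_reachable).mpr ⟨x1, fun v => ?_⟩
  obtain ⟨⟨hv1, hvn⟩, hv3⟩ := v.2
  rcases (by omega : v.val = 1 ∨ v.val = 2 ∨ v.val = 4 ∨ 5 ≤ v.val) with h | h | h | h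
  · exact (Subtype.ext h.symm : x1 = v) ▸ .rfl
  · exact (Subtype.ext h.symm : x2 = v) ▸ h16.reachable.trans h62.reachable
  · have h2v : (Tgraph n).Adj x2 v := (adj_iff _ _).mpr (by simp [x2, h])
    exact h16.reachable.trans (h62.reachable.trans h2v.reachable)
  · exact ((adj_iff x1 v).mpr (by simp [x1, h])).reachable

theorem isAcyclic : (Tgraph n).IsAcyclic := by
  refine SimpleGraph.isAcyclic_of_forall_exists_subsingleton_neighborSet_inter fun S _ hS => ?_
  by_cases hleaf : ∃ w ∈ S, w.val ≠ 1 ∧ w.val ≠ 2 ∧ w.val ≠ 6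
  · obtain ⟨w, hwS, hw⟩ := hleaf
    refine ⟨w, hwS, fun x hx y hy => Subtype.ext ?_⟩
    simp only [Set.mem_inter_iff, SimpleGraph.mem_neighborSet, adj_iff] at hx hy
    omega
  · -- Inside `{1, 2, 6}` every vertex except `6` has at most the neighbour `6`.
    push Not at hleaf
    obtain ⟨w, hwS, hw6⟩ : ∃ w ∈ S, w.val ≠ 6 := by
      obtain ⟨x, hx, y, hy, hxy⟩ := hS
      by_contra! h
      exact hxy (Subtype.ext ((h x hx).trans (h y hy).symm))
    refine ⟨w, hwS, fun x hx y hy => Subtype.ext ?_⟩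
    have := hleaf w hwS
    have := hleaf x hx.2
    have := hleaf y hy.2
    simp only [Set.mem_inter_iff, SimpleGraph.mem_neighborSet, adj_iff] at hx hy
    omega

theorem isTree (hn : 6 ≤ n) : (Tgraph n).IsTree :=
  ⟨connected hn, isAcyclic⟩

theorem isMaxIndepSet_one_two :
    IsMaxIndepSet (Tgraph n) {a | a.val = 1 ∨ a.val = 2} := by
  refine IsIndepSet.isMaxIndepSet (fun a ha b hb hab => ?_) fun v hv => ?_
  · simp only [Set.mem_ofPred_eq, adj_iff] at ha hb hab
    omega
  · obtain ⟨⟨hv1, hvn⟩, hv3⟩ := v.2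
    simp only [Set.mem_ofPred_eq] at hv
    rcases (by omega : v.val = 4 ∨ 5 ≤ v.val) with h | h
    · exact ⟨⟨2, by omega⟩, .inr rfl, (adj_iff _ _).mpr (by simp [h])⟩
    · exact ⟨⟨1, by omega⟩, .inl rfl, (adj_iff _ _).mpr (by simp [h])⟩

theorem exists_ne_not_adj (hn : 2 ≤ n) (v : {i : ℕ // (1 ≤ i ∧ i ≤ n) ∧ i ≠ 3}) :
    ∃ w, w ≠ v ∧ ¬(Tgraph n).Adj v w := by
  suffices ∃ k, ∃ hk : (1 ≤ k ∧ k ≤ n) ∧ k ≠ 3, k ≠ v.val ∧ ¬(Tgraph n).Adj v ⟨k, hk⟩ by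
    obtain ⟨k, hk, hkv, hadj⟩ := this
    exact ⟨⟨k, hk⟩, fun h => hkv (congrArg Subtype.val h), hadj⟩
  obtain ⟨⟨hv1, hvn⟩, hv3⟩ := v.2
  rcases (by omega : v.val = 1 ∨ v.val = 6 ∨ (v.val = 2 ∨ v.val = 4) ∨ (5 ≤ v.val ∧ v.val ≠ 6))
    with h | h | h | h
  · exact ⟨2, by omega, by omega, by simp only [adj_iff]; omega⟩
  · exact ⟨5, by omega, by omega, by simp only [adj_iff]; omega⟩
  · exact ⟨1, by omega, by omega, by simp only [adj_iff]; omega⟩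
  · exact ⟨2, by omega, by omega, by simp only [adj_iff]; omega⟩

theorem ncard_one_two (hn : 2 ≤ n) :
    {a : {i : ℕ // (1 ≤ i ∧ i ≤ n) ∧ i ≠ 3} | a.val = 1 ∨ a.val = 2}.ncard = 2 := by
  rw [Set.ncard_eq_two]
  refine ⟨⟨1, by omega⟩, ⟨2, by omega⟩, by simp, ?_⟩
  ext a
  simp only [Set.mem_ofPred_eq, Set.mem_insert_iff, Set.mem_singleton_iff, Subtype.ext_iff]

end Tgraph

/-- `T` is a tree and `{1, 2}` is a maximal independent set of `T` of minimum
cardinality among all maximal independent sets of `T`. -/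
theorem Tgraph_isTree_and_min_maxIndep (n : ℕ) (hn : 6 ≤ n) :
    (Tgraph n).IsTree ∧
    IsMaxIndepSet (Tgraph n) {a | a.val = 1 ∨ a.val = 2} ∧
    ∀ B : Set {i : ℕ // (1 ≤ i ∧ i ≤ n) ∧ i ≠ 3}, IsMaxIndepSet (Tgraph n) B →
      ({a : {i : ℕ // (1 ≤ i ∧ i ≤ n) ∧ i ≠ 3} | a.val = 1 ∨ a.val = 2}).ncard ≤ B.ncard := by
  have : Nonempty {i : ℕ // (1 ≤ i ∧ i ≤ n) ∧ i ≠ 3} := ⟨⟨1, by omega⟩⟩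
  refine ⟨Tgraph.isTree hn, Tgraph.isMaxIndepSet_one_two, fun B hB => ?_⟩
  rw [Tgraph.ncard_one_two (by omega)]
  exact hB.two_le_ncard (Tgraph.exists_ne_not_adj (by omega))
end

section
/- Let n ≥ 6, S = K[x_1,...,x_n], and let I be the ideal generated by u_i = x_1 x_3 x_{i+4} for 1 ≤ i ≤ n-4, u_{n-3} = x_1 x_4 x_5, u_{n-2} = x_2 x_3 x_4, u_{n-1} = x_2 x_3 x_6. Then the second squarefree power I^[2] is the principal ideal generated by u_{n-3} u_{n-1} = x_1 x_2 x_3 x_4 x_5 x_6. -/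
open MvPolynomial

/-- Depth of an `S`-module `M` over `S = K[x_1,…,x_n]` with respect to the
irrelevant maximal ideal `(x_1,…,x_n)`: the supremum of the lengths of
regular sequences on `M` consisting of elements of that ideal. -/
noncomputable def pdepth (n : ℕ) (K : Type) [Field K]
    (M : Type) [AddCommGroup M] [Module (MvPolynomial (Fin n) K) M] : ℕ :=
  sSup {k : ℕ | ∃ rs : List (MvPolynomial (Fin n) K), rs.length = k ∧
    (∀ r ∈ rs, r ∈ Ideal.span (Set.range (X : Fin n → MvPolynomial (Fin n) K))) ∧
    RingTheory.Sequence.IsRegular M rs}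
/-- `f` is a squarefree monomial (a product of distinct variables). -/
def IsSqfreeMonomial {n : ℕ} {K : Type} [Field K]
    (f : MvPolynomial (Fin n) K) : Prop :=
  ∃ s : Finset (Fin n), f = ∏ i ∈ s, X i

/-- `f` is a (monic) monomial. -/
def IsMonomialElem {n : ℕ} {K : Type} [Field K]
    (f : MvPolynomial (Fin n) K) : Prop :=
  ∃ s : (Fin n →₀ ℕ), f = monomial s (1 : K)
/-- The `k`-th squarefree power `I^[k]` of `I`: the ideal generated by the
squarefree monomials belonging to `I^k`. -/
noncomputable def sqPow {n : ℕ} {K : Type} [Field K]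
    (I : Ideal (MvPolynomial (Fin n) K)) (k : ℕ) :
    Ideal (MvPolynomial (Fin n) K) :=
  Ideal.span {f | IsSqfreeMonomial f ∧ f ∈ I ^ k}

/-- `d_k`: the minimal degree of a monomial belonging to `I^[k]`. -/
noncomputable def dmin {n : ℕ} {K : Type} [Field K]
    (I : Ideal (MvPolynomial (Fin n) K)) (k : ℕ) : ℕ :=
  sInf {d : ℕ | ∃ f, IsMonomialElem f ∧ f ∈ sqPow I k ∧ f.totalDegree = d}

/-- The normalized depth function `g_I(k) = depth(S/I^[k]) - (d_k - 1)`. -/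
noncomputable def gI (n : ℕ) (K : Type) [Field K]
    (I : Ideal (MvPolynomial (Fin n) K)) (k : ℕ) : ℤ :=
  (pdepth n K (MvPolynomial (Fin n) K ⧸ sqPow I k) : ℤ) - ((dmin I k : ℤ) - 1)
/-- The generating set `{u_1,…,u_{n-1}}` of the ideal `I`:
`u_i = x_1 x_3 x_{i+4}` for `1 ≤ i ≤ n-4`, `u_{n-3} = x_1 x_4 x_5`,
`u_{n-2} = x_2 x_3 x_4`, `u_{n-1} = x_2 x_3 x_6` (the variable `x_j`
corresponds to `X ⟨j-1, _⟩`). -/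
def IGens (n : ℕ) (hn : 6 ≤ n) (K : Type) [Field K] :
    Set (MvPolynomial (Fin n) K) :=
  {f | (∃ i : ℕ, ∃ _ : 1 ≤ i, ∃ _ : i ≤ n - 4,
          f = X ⟨0, by omega⟩ * X ⟨2, by omega⟩ * X ⟨i + 3, by omega⟩)
    ∨ f = X ⟨0, by omega⟩ * X ⟨3, by omega⟩ * X ⟨4, by omega⟩
    ∨ f = X ⟨1, by omega⟩ * X ⟨2, by omega⟩ * X ⟨3, by omega⟩
    ∨ f = X ⟨1, by omega⟩ * X ⟨2, by omega⟩ * X ⟨5, by omega⟩}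

/-! Every generator other than `x_1 x_4 x_5` is divisible by `x_3`, so a product of two generators
with disjoint supports involves `x_1 x_4 x_5`, and its partner, avoiding `x_1` and `x_4`, must be
`x_2 x_3 x_6`. Since `I^[2]` is generated by such products of generators with disjoint supports,
it is generated by the single monomial `x_1 x_2 x_3 x_4 x_5 x_6`. -/

section SquarefreeMonomials

variable {σ R : Type*} [CommSemiring R]

lemma prod_X_eq_monomial (s : Finset σ) :
    (∏ i ∈ s, X i : MvPolynomial σ R) = monomial (∑ i ∈ s, Finsupp.single i 1) 1 := by
  classical
  induction s using Finset.induction with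
  | empty => simp
  | insert a s ha ih =>
    rw [Finset.prod_insert ha, Finset.sum_insert ha, ih, X, monomial_mul, one_mul]

lemma prod_X_triple [DecidableEq σ] {a b c : σ} (hab : a ≠ b) (hac : a ≠ c) (hbc : b ≠ c) :
    ∏ i ∈ {a, b, c}, (X i : MvPolynomial σ R) = X a * X b * X c := by
  rw [Finset.prod_insert (by simp [hab, hac]), Finset.prod_pair hbc, mul_assoc]

lemma sum_single_one_apply [DecidableEq σ] (s : Finset σ) (j : σ) :
    (∑ i ∈ s, Finsupp.single i 1 : σ →₀ ℕ) j = if j ∈ s then 1 else 0 := by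
  simp [Finsupp.finsetSum_apply, Finsupp.single_apply]

lemma disjoint_and_union_subset_of_add_le [DecidableEq σ] {s t u : Finset σ}
    (h : ∑ i ∈ s, Finsupp.single i 1 + ∑ i ∈ t, Finsupp.single i 1 ≤
      (∑ i ∈ u, Finsupp.single i 1 : σ →₀ ℕ)) :
    Disjoint s t ∧ s ∪ t ⊆ u := by
  have hj (j : σ) := Finsupp.le_def.mp h j
  simp only [Finsupp.add_apply, sum_single_one_apply] at hj
  refine ⟨Finset.disjoint_left.mpr fun j hs ht => ?_,
    Finset.union_subset (fun j hs => ?_) fun j ht => ?_⟩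
  all_goals have := hj j; split_ifs at this <;> simp_all

lemma monomial_one_mem_span_monomial_image [Nontrivial R] {t : σ →₀ ℕ} {B : Set (σ →₀ ℕ)} :
    monomial t (1 : R) ∈ Ideal.span ((fun b => monomial b (1 : R)) '' B) ↔ ∃ b ∈ B, b ≤ t := by
  classical
  simp [mem_ideal_span_monomial_image, support_monomial]

lemma span_prod_X_image_sq (G : Set (Finset σ)) :
    Ideal.span ((fun s => ∏ i ∈ s, (X i : MvPolynomial σ R)) '' G) ^ 2 =
      Ideal.span ((fun d => monomial d (1 : R)) ''
        {d | ∃ s ∈ G, ∃ t ∈ G, d = ∑ i ∈ s, Finsupp.single i 1 + ∑ i ∈ t, Finsupp.single i 1}) := by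
  rw [sq, Ideal.span_mul_span']
  congr 1
  ext f
  simp only [Set.mem_mul, Set.mem_image]
  constructor
  · rintro ⟨_, ⟨s, hs, rfl⟩, _, ⟨t, ht, rfl⟩, rfl⟩
    exact ⟨_, ⟨s, hs, t, ht, rfl⟩, by simp only [prod_X_eq_monomial, monomial_mul, one_mul]⟩
  · rintro ⟨_, ⟨s, hs, t, ht, rfl⟩, rfl⟩
    exact ⟨_, ⟨s, hs, rfl⟩, _, ⟨t, ht, rfl⟩,
      by simp only [prod_X_eq_monomial, monomial_mul, one_mul]⟩

end SquarefreeMonomials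

def disjointUnions {σ : Type*} [DecidableEq σ] (G : Set (Finset σ)) : Set (Finset σ) :=
  {u | ∃ s ∈ G, ∃ t ∈ G, Disjoint s t ∧ u = s ∪ t}

theorem sqPow_two_span_prod_X {n : ℕ} {K : Type} [Field K] (G : Set (Finset (Fin n))) :
    sqPow (Ideal.span ((fun s => ∏ i ∈ s, (X i : MvPolynomial (Fin n) K)) '' G)) 2 =
      Ideal.span ((fun s => ∏ i ∈ s, (X i : MvPolynomial (Fin n) K)) '' disjointUnions G) := by
  classical
  apply le_antisymm
  · refine Ideal.span_le.mpr ?_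
    rintro _ ⟨⟨u, rfl⟩, hu⟩
    rw [span_prod_X_image_sq, prod_X_eq_monomial, monomial_one_mem_span_monomial_image] at hu
    obtain ⟨_, ⟨s, hs, t, ht, rfl⟩, hle⟩ := hu
    obtain ⟨hst, hsub⟩ := disjoint_and_union_subset_of_add_le hle
    rw [SetLike.mem_coe, ← Finset.prod_sdiff hsub]
    exact Ideal.mul_mem_left _ _ (Ideal.subset_span ⟨_, ⟨s, hs, t, ht, hst, rfl⟩, rfl⟩)
  · refine Ideal.span_le.mpr ?_
    rintro _ ⟨_, ⟨s, hs, t, ht, hst, rfl⟩, rfl⟩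
    refine Ideal.subset_span ⟨⟨_, rfl⟩, ?_⟩
    dsimp only
    rw [Finset.prod_union hst, sq]
    exact Ideal.mul_mem_mul (Ideal.subset_span ⟨s, hs, rfl⟩) (Ideal.subset_span ⟨t, ht, rfl⟩)

def IGenSupports (n : ℕ) (hn : 6 ≤ n) : Set (Finset (Fin n)) :=
  {s | (∃ i : ℕ, ∃ _ : 1 ≤ i, ∃ _ : i ≤ n - 4,
          s = {⟨0, by omega⟩, ⟨2, by omega⟩, ⟨i + 3, by omega⟩})
    ∨ s = {⟨0, by omega⟩, ⟨3, by omega⟩, ⟨4, by omega⟩}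
    ∨ s = {⟨1, by omega⟩, ⟨2, by omega⟩, ⟨3, by omega⟩}
    ∨ s = {⟨1, by omega⟩, ⟨2, by omega⟩, ⟨5, by omega⟩}}

lemma IGens_eq_image_IGenSupports (n : ℕ) (hn : 6 ≤ n) (K : Type) [Field K] :
    IGens n hn K = (fun s => ∏ i ∈ s, X i) '' IGenSupports n hn := by
  ext f
  constructor
  · rintro (⟨i, hi1, hi2, rfl⟩ | rfl | rfl | rfl)
    · refine ⟨_, Or.inl ⟨i, hi1, hi2, rfl⟩, prod_X_triple ?_ ?_ ?_⟩ <;> simp [Fin.ext_iff]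
    · refine ⟨_, Or.inr (Or.inl rfl), prod_X_triple ?_ ?_ ?_⟩ <;> simp [Fin.ext_iff]
    · refine ⟨_, Or.inr (Or.inr (Or.inl rfl)), prod_X_triple ?_ ?_ ?_⟩ <;> simp [Fin.ext_iff]
    · refine ⟨_, Or.inr (Or.inr (Or.inr rfl)), prod_X_triple ?_ ?_ ?_⟩ <;> simp [Fin.ext_iff]
  · rintro ⟨s, (⟨i, hi1, hi2, rfl⟩ | rfl | rfl | rfl), rfl⟩
    · refine Or.inl ⟨i, hi1, hi2, prod_X_triple ?_ ?_ ?_⟩ <;> simp [Fin.ext_iff]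
    · refine Or.inr (Or.inl (prod_X_triple ?_ ?_ ?_)) <;> simp [Fin.ext_iff]
    · refine Or.inr (Or.inr (Or.inl (prod_X_triple ?_ ?_ ?_))) <;> simp [Fin.ext_iff]
    · refine Or.inr (Or.inr (Or.inr (prod_X_triple ?_ ?_ ?_))) <;> simp [Fin.ext_iff]

lemma disjointUnions_IGenSupports (n : ℕ) (hn : 6 ≤ n) :
    disjointUnions (IGenSupports n hn) =
      {{⟨0, by omega⟩, ⟨3, by omega⟩, ⟨4, by omega⟩} ∪
        {⟨1, by omega⟩, ⟨2, by omega⟩, ⟨5, by omega⟩}} := by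
  ext u
  constructor
  · rintro ⟨s, hs, t, ht, hst, rfl⟩
    rcases hs with ⟨i, hi1, hi2, rfl⟩ | rfl | rfl | rfl <;>
      rcases ht with ⟨j, hj1, hj2, rfl⟩ | rfl | rfl | rfl <;>
      first
      | rfl
      | exact Finset.union_comm _ _
      | simp [Finset.disjoint_insert_right, Fin.ext_iff] at hst
  · rintro rfl
    refine ⟨_, Or.inr (Or.inl rfl), _, Or.inr (Or.inr (Or.inr rfl)), ?_, rfl⟩
    simp [Finset.disjoint_insert_right, Fin.ext_iff]

/-- `I^[2]` is the principal ideal generated by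
`u_{n-3} u_{n-1} = x_1 x_2 x_3 x_4 x_5 x_6`. -/
theorem sqPow_two_principal (n : ℕ) (hn : 6 ≤ n) (K : Type) [Field K] :
    sqPow (Ideal.span (IGens n hn K)) 2 =
      Ideal.span {X ⟨0, by omega⟩ * X ⟨1, by omega⟩ * X ⟨2, by omega⟩ *
        X ⟨3, by omega⟩ * X ⟨4, by omega⟩ * (X ⟨5, by omega⟩ :
          MvPolynomial (Fin n) K)} := by
  rw [IGens_eq_image_IGenSupports, sqPow_two_span_prod_X, disjointUnions_IGenSupports,
    Set.image_singleton, Finset.prod_union (by simp [Finset.disjoint_insert_right, Fin.ext_iff]),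
    prod_X_triple (by simp [Fin.ext_iff]) (by simp [Fin.ext_iff]) (by simp [Fin.ext_iff]),
    prod_X_triple (by simp [Fin.ext_iff]) (by simp [Fin.ext_iff]) (by simp [Fin.ext_iff])]
  exact congrArg (fun p => Ideal.span {p}) (by ring)
end
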